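/- arXiv:1810.01372 — 2 statements merged into one kernel-verified Lean document; each statement's English description precedes it below -/
import Mathlib

section
/- In the Eisenberg–Noe setting (α_x = α_L = 1) under the regularity assumption (p̄_i > 0 and Σ_{j=1}^n π_{ij} < 1 for every i ≤ n), let X : Ω → ℝⁿ₊ be an integrable random endowment vector, let U be uniformly distributed on [0,1] on the same probability space, and let Z be the comonotonic version of X given by Z_i = F_{X_i}^{-1}(U), where F_{X_i}^{-1}(u) = inf{t ∈ ℝ₊ : ℙ(X_i ≤ t) ≥ u}. Then for every bank i ≤ n: 𝔼[V_i(Z)] ≤ 𝔼[V_i(X)] and 𝔼[p_i(Z)] ≤ 𝔼[p_i(X)]. -/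
/-!
The clearing vector is the decreasing limit of the Picard iterates `p⁰ = p̄`,
`pᵏ⁺¹ = p̄ ∧ (x + Πᵀ pᵏ)`, each a nondecreasing continuous function of `x`. By induction on `k`,
`pᵏᵢ(Z)` lies below `pᵏᵢ(X)` in the increasing concave order, i.e.
`𝔼[min c (pᵏᵢ(Z))] ≤ 𝔼[min c (pᵏᵢ(X))]` for every `c`. The induction step rests on a comonotone
split: if the `hⱼ` are nondecreasing and `U` has no atoms, the level `c` can be shared out as
`c = ∑ cⱼ` so that `min c (∑ hⱼ(U)) ≤ ∑ min cⱼ (hⱼ(U))` almost surely, while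
`∑ min cⱼ Tⱼ ≤ min c (∑ Tⱼ)` whatever the dependence between the `Tⱼ`. Taking `c = p̄ᵢ` and
letting `k → ∞` by dominated convergence gives `𝔼[pᵢ(Z)] ≤ 𝔼[pᵢ(X)]`; the bound on `𝔼[Vᵢ]`
follows by linearity, as `Zᵢ` and `Xᵢ` have the same law.
-/

open Matrix BigOperators MeasureTheory

noncomputable section

/-- Total liabilities `p̄_i = Σ_{j=1}^{n+1} L_{ij}`. -/
def pbar {n : ℕ} (L : Matrix (Fin n) (Fin (n + 1)) ℝ) (i : Fin n) : ℝ :=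
  ∑ j, L i j

/-- Relative liabilities `π_{ij} = L_{ij} / p̄_i` if `p̄_i > 0`, else `0`. -/
def relLiab {n : ℕ} (L : Matrix (Fin n) (Fin (n + 1)) ℝ) (i j : Fin n) : ℝ :=
  if 0 < pbar L i then L i j.castSucc / pbar L i else 0

/-- `p` is the greatest clearing payment vector for endowments `x` in the Eisenberg–Noe
setting: the greatest fixed point of `p ↦ p̄ ∧ (x + Πᵀ p)` on `[0, p̄]`. -/
def IsGreatestClearingPayment {n : ℕ} (L : Matrix (Fin n) (Fin (n + 1)) ℝ)
    (x p : Fin n → ℝ) : Prop :=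
  IsGreatest {q : Fin n → ℝ | (∀ i, 0 ≤ q i ∧ q i ≤ pbar L i) ∧
    ∀ i, q i = min (pbar L i) (x i + ∑ j, relLiab L j i * q j)} p

open Filter Topology Set
open ProbabilityTheory (IdentDistrib cdf)

section Clearing

variable {n : ℕ} {L : Matrix (Fin n) (Fin (n + 1)) ℝ}

variable (L) in
def clearingMap (x p : Fin n → ℝ) : Fin n → ℝ :=
  fun i => min (pbar L i) (x i + ∑ j, relLiab L j i * p j)

variable (L) in
def clearingIter (k : ℕ) (x : Fin n → ℝ) : Fin n → ℝ :=
  (clearingMap L x)^[k] (pbar L)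

lemma clearingIter_succ (k : ℕ) (x : Fin n → ℝ) :
    clearingIter L (k + 1) x = clearingMap L x (clearingIter L k x) :=
  Function.iterate_succ_apply' _ _ _

lemma clearingMap_le_pbar (x p : Fin n → ℝ) : clearingMap L x p ≤ pbar L :=
  fun _ => min_le_left _ _

lemma clearingIter_le_pbar (k : ℕ) (x : Fin n → ℝ) : clearingIter L k x ≤ pbar L := by
  cases k with
  | zero => exact le_rfl
  | succ k => simpa only [clearingIter_succ] using clearingMap_le_pbar _ _

lemma continuous_clearingMap :
    Continuous fun xp : (Fin n → ℝ) × (Fin n → ℝ) => clearingMap L xp.1 xp.2 := by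
  unfold clearingMap
  fun_prop

lemma continuous_clearingIter (k : ℕ) : Continuous (clearingIter L k) := by
  induction k with
  | zero => exact continuous_const
  | succ k ih =>
    simp_rw [funext (clearingIter_succ (L := L) k)]
    exact continuous_clearingMap.comp (continuous_id.prodMk ih)

lemma IsGreatestClearingPayment.isFixedPt {x p : Fin n → ℝ}
    (hp : IsGreatestClearingPayment L x p) : Function.IsFixedPt (clearingMap L x) p :=
  funext fun i => (hp.1.2 i).symm

variable (hL : ∀ i j, 0 ≤ L i j)
include hL

lemma relLiab_nonneg (i j : Fin n) : 0 ≤ relLiab L i j := by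
  unfold relLiab
  split_ifs with h
  exacts [div_nonneg (hL i j.castSucc) h.le, le_rfl]

lemma pbar_nonneg : 0 ≤ pbar L :=
  fun i => Finset.sum_nonneg fun j _ => hL i j

lemma clearingMap_mono {x y p q : Fin n → ℝ} (hxy : x ≤ y) (hpq : p ≤ q) :
    clearingMap L x p ≤ clearingMap L y q := fun i =>
  min_le_min_left _ <| add_le_add (hxy i) <| Finset.sum_le_sum fun j _ =>
    mul_le_mul_of_nonneg_left (hpq j) (relLiab_nonneg hL j i)

lemma monotone_clearingMap (x : Fin n → ℝ) : Monotone (clearingMap L x) :=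
  fun _ _ => clearingMap_mono hL le_rfl

lemma clearingMap_nonneg {x p : Fin n → ℝ} (hx : 0 ≤ x) (hp : 0 ≤ p) :
    0 ≤ clearingMap L x p := fun i =>
  le_min (pbar_nonneg hL i) <| add_nonneg (hx i) <| Finset.sum_nonneg fun j _ =>
    mul_nonneg (relLiab_nonneg hL j i) (hp j)

lemma monotone_clearingIter (k : ℕ) : Monotone (clearingIter L k) := by
  intro x y hxy
  induction k with
  | zero => exact le_rfl
  | succ k ih => simpa only [clearingIter_succ] using clearingMap_mono hL hxy ih

lemma clearingIter_nonneg {x : Fin n → ℝ} (hx : 0 ≤ x) (k : ℕ) : 0 ≤ clearingIter L k x := by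
  induction k with
  | zero => exact pbar_nonneg hL
  | succ k ih => simpa only [clearingIter_succ] using clearingMap_nonneg hL hx ih

lemma IsGreatestClearingPayment.le_clearingIter {x p : Fin n → ℝ}
    (hp : IsGreatestClearingPayment L x p) (k : ℕ) : p ≤ clearingIter L k x := by
  rw [← hp.isFixedPt.iterate k]
  exact (monotone_clearingMap hL x).iterate k fun i => (hp.1.1 i).2

/-- Kleene iteration from the top: the iterates decrease to a fixed point, which dominates every
fixed point below `p̄`. -/
lemma IsGreatestClearingPayment.tendsto_clearingIter {x p : Fin n → ℝ} (hx : 0 ≤ x)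
    (hp : IsGreatestClearingPayment L x p) :
    Tendsto (fun k => clearingIter L k x) atTop (𝓝 p) := by
  have hanti : Antitone fun k => clearingIter L k x :=
    (monotone_clearingMap hL x).antitone_iterate_of_map_le (clearingMap_le_pbar x _)
  have hlim := tendsto_atTop_ciInf hanti ⟨0, by
    rintro _ ⟨k, rfl⟩; exact clearingIter_nonneg hL hx k⟩
  set q := ⨅ k, clearingIter L k x
  have hfix : clearingMap L x q = q := by
    refine tendsto_nhds_unique ?_ (hlim.comp (tendsto_add_atTop_nat 1))
    simpa only [Function.comp_def, clearingIter_succ] using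
      (continuous_clearingMap.comp (Continuous.prodMk_right x)).continuousAt.tendsto.comp hlim
  have hq0 : 0 ≤ q := ge_of_tendsto' hlim fun k => clearingIter_nonneg hL hx k
  have hq : q ≤ pbar L := le_of_tendsto' hlim fun k => clearingIter_le_pbar k x
  have hqp : q ≤ p := hp.2 ⟨fun i => ⟨hq0 i, hq i⟩, fun i => (congrFun hfix i).symm⟩
  rwa [le_antisymm hqp (ge_of_tendsto' hlim (hp.le_clearingIter hL))] at hlim

end Clearing

section ComonotoneSplit

variable {ι : Type*} [Fintype ι]

lemma exists_sum_eq_of_le_of_le {l r : ι → ℝ} (hlr : l ≤ r) {c : ℝ} (hl : ∑ j, l j ≤ c)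
    (hr : c ≤ ∑ j, r j) : ∃ d : ι → ℝ, ∑ j, d j = c ∧ l ≤ d ∧ d ≤ r := by
  have hf : Continuous fun t : ℝ => ∑ j, (l j + t * (r j - l j)) := by fun_prop
  obtain ⟨t, ⟨ht0, ht1⟩, hft⟩ :=
    intermediate_value_Icc zero_le_one hf.continuousOn ⟨by simpa using hl, by simpa using hr⟩
  refine ⟨fun j => l j + t * (r j - l j), hft, fun j => ?_, fun j => ?_⟩ <;>
    nlinarith [hlr j]

lemma exists_sum_eq_of_le [Nonempty ι] {r : ι → ℝ} {c : ℝ} (hr : c ≤ ∑ j, r j) :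
    ∃ d : ι → ℝ, ∑ j, d j = c ∧ d ≤ r := by
  have hcard : (0 : ℝ) < Fintype.card ι := Nat.cast_pos.2 Fintype.card_pos
  refine ⟨fun j => r j - (∑ i, r i - c) / Fintype.card ι, ?_, fun j => ?_⟩
  · simp only [Finset.sum_sub_distrib, Finset.sum_const, Finset.card_univ, nsmul_eq_mul]
    field_simp
    ring
  · exact sub_le_self _ (div_nonneg (by linarith) hcard.le)

lemma exists_sum_eq_of_ge [Nonempty ι] {l : ι → ℝ} {c : ℝ} (hl : ∑ j, l j ≤ c) :
    ∃ d : ι → ℝ, ∑ j, d j = c ∧ l ≤ d := by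
  obtain ⟨d, hd, hdl⟩ := exists_sum_eq_of_le (r := -l) (c := -c) (by simpa using hl)
  exact ⟨-d, by simp [hd], fun j => le_neg_of_le_neg (hdl j)⟩

variable {h : ι → ℝ → ℝ} {a b u₀ c : ℝ}

lemma exists_lower_threshold (hmono : ∀ j, MonotoneOn (h j) (Ioo a b))
    (hnonneg : ∀ j, ∀ u ∈ Ioo a b, 0 ≤ h j u) (hau : a < u₀) (hub : u₀ ≤ b)
    (hleft : ∀ u ∈ Ioo a u₀, ∑ j, h j u ≤ c) :
    ∃ l : ι → ℝ, ∑ j, l j ≤ c ∧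
      ∀ j, (∀ u ∈ Ioo a u₀, h j u ≤ l j) ∧ ∀ v ∈ Ioo a b, u₀ ≤ v → l j ≤ h j v := by
  have hsub : Ioo a u₀ ⊆ Ioo a b := Ioo_subset_Ioo_right hub
  have hne : (Ioo a u₀).Nonempty := nonempty_Ioo.2 hau
  have hbdd : ∀ j, BddAbove (h j '' Ioo a u₀) := fun j => ⟨c, forall_mem_image.2 fun u hu =>
    (Finset.single_le_sum (fun i _ => hnonneg i u (hsub hu)) (Finset.mem_univ j)).trans
      (hleft u hu)⟩
  refine ⟨fun j => sSup (h j '' Ioo a u₀), ?_, fun j => ⟨fun u hu =>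
    le_csSup (hbdd j) (mem_image_of_mem _ hu), fun v hv hv₀ => csSup_le (hne.image _)
      (forall_mem_image.2 fun u hu => hmono j (hsub hu) hv (hu.2.le.trans hv₀))⟩⟩
  have hlim := tendsto_finsetSum Finset.univ fun j _ =>
    ((hmono j).mono hsub).tendsto_nhdsWithin_Ioo_left hne (hbdd j)
  exact le_of_tendsto hlim (mem_of_superset (Ioo_mem_nhdsLT hau) fun u hu => hleft u hu)

lemma exists_upper_threshold (hmono : ∀ j, MonotoneOn (h j) (Ioo a b))
    (hnonneg : ∀ j, ∀ u ∈ Ioo a b, 0 ≤ h j u) (hau : a ≤ u₀) (hub : u₀ < b)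
    (hright : ∀ u ∈ Ioo u₀ b, c ≤ ∑ j, h j u) :
    ∃ r : ι → ℝ, c ≤ ∑ j, r j ∧
      ∀ j, (∀ u ∈ Ioo u₀ b, r j ≤ h j u) ∧ ∀ v ∈ Ioo a b, v ≤ u₀ → h j v ≤ r j := by
  have hsub : Ioo u₀ b ⊆ Ioo a b := Ioo_subset_Ioo_left hau
  have hne : (Ioo u₀ b).Nonempty := nonempty_Ioo.2 hub
  have hbdd : ∀ j, BddBelow (h j '' Ioo u₀ b) :=
    fun j => ⟨0, forall_mem_image.2 fun u hu => hnonneg j u (hsub hu)⟩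
  refine ⟨fun j => sInf (h j '' Ioo u₀ b), ?_, fun j => ⟨fun u hu =>
    csInf_le (hbdd j) (mem_image_of_mem _ hu), fun v hv hv₀ => le_csInf (hne.image _)
      (forall_mem_image.2 fun u hu => hmono j hv (hsub hu) (hv₀.trans hu.1.le))⟩⟩
  have hlim := tendsto_finsetSum Finset.univ fun j _ =>
    ((hmono j).mono hsub).tendsto_nhdsWithin_Ioo_right hne (hbdd j)
  exact ge_of_tendsto hlim (mem_of_superset (Ioo_mem_nhdsGT hub) fun u hu => hright u hu)

lemma exists_thresholds [Nonempty ι] (hmono : ∀ j, MonotoneOn (h j) (Ioo a b))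
    (hnonneg : ∀ j, ∀ u ∈ Ioo a b, 0 ≤ h j u) (hab : a < b) (hau : a ≤ u₀) (hub : u₀ ≤ b)
    (hleft : ∀ u ∈ Ioo a u₀, ∑ j, h j u ≤ c) (hright : ∀ u ∈ Ioo u₀ b, c ≤ ∑ j, h j u) :
    ∃ d : ι → ℝ, ∑ j, d j = c ∧
      ∀ j, (∀ u ∈ Ioo a u₀, h j u ≤ d j) ∧ ∀ u ∈ Ioo u₀ b, d j ≤ h j u := by
  rcases hau.eq_or_lt with rfl | hau
  · obtain ⟨r, hr, hhr⟩ := exists_upper_threshold hmono hnonneg le_rfl hab hright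
    obtain ⟨d, hd, hdr⟩ := exists_sum_eq_of_le hr
    exact ⟨d, hd, fun j => ⟨by simp, fun u hu => (hdr j).trans ((hhr j).1 u hu)⟩⟩
  rcases hub.eq_or_lt with rfl | hub
  · obtain ⟨l, hl, hhl⟩ := exists_lower_threshold hmono hnonneg hau le_rfl hleft
    obtain ⟨d, hd, hld⟩ := exists_sum_eq_of_ge hl
    exact ⟨d, hd, fun j => ⟨fun u hu => ((hhl j).1 u hu).trans (hld j), by simp⟩⟩
  obtain ⟨l, hl, hhl⟩ := exists_lower_threshold hmono hnonneg hau hub.le hleft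
  obtain ⟨r, hr, hhr⟩ := exists_upper_threshold hmono hnonneg hau.le hub hright
  have hu₀ : u₀ ∈ Ioo a b := ⟨hau, hub⟩
  obtain ⟨d, hd, hld, hdr⟩ := exists_sum_eq_of_le_of_le
    (fun j => ((hhl j).2 u₀ hu₀ le_rfl).trans ((hhr j).2 u₀ hu₀ le_rfl)) hl hr
  exact ⟨d, hd, fun j => ⟨fun u hu => ((hhl j).1 u hu).trans (hld j),
    fun u hu => (hdr j).trans ((hhr j).1 u hu)⟩⟩

theorem exists_sum_eq_min_sum_le_sum_min [Nonempty ι] (hmono : ∀ j, MonotoneOn (h j) (Ioo a b))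
    (hnonneg : ∀ j, ∀ u ∈ Ioo a b, 0 ≤ h j u) (hab : a < b) (c : ℝ) :
    ∃ d : ι → ℝ, ∑ j, d j = c ∧ ∃ u₀, ∀ u ∈ Ioo a b, u ≠ u₀ →
      min c (∑ j, h j u) ≤ ∑ j, min (d j) (h j u) := by
  set V := {u ∈ Ioo a b | ∑ j, h j u ≤ c}
  have hbdd : BddAbove (insert a V) := ⟨b, by rintro u (rfl | hu); exacts [hab.le, hu.1.2.le]⟩
  -- `u₀` is where `∑ j, h j` crosses `c`; the `d j` share out the jumps of the `h j` at `u₀`.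
  set u₀ := sSup (insert a V)
  have hau : a ≤ u₀ := le_csSup hbdd (mem_insert _ _)
  have hub : u₀ ≤ b := csSup_le (insert_nonempty _ _) <| by
    rintro u (rfl | hu); exacts [hab.le, hu.1.2.le]
  have hleft : ∀ u ∈ Ioo a u₀, ∑ j, h j u ≤ c := by
    intro u hu
    obtain ⟨v, hv, huv⟩ := exists_lt_of_lt_csSup (insert_nonempty _ _) hu.2
    rcases hv with rfl | hv
    · exact absurd huv hu.1.not_gt
    · exact (Finset.sum_le_sum fun j _ =>
        hmono j ⟨hu.1, huv.trans hv.1.2⟩ hv.1 huv.le).trans hv.2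
  have hright : ∀ u ∈ Ioo u₀ b, c ≤ ∑ j, h j u := by
    intro u hu
    by_contra! hlt
    exact hu.1.not_ge (le_csSup hbdd (mem_insert_of_mem _ ⟨⟨hau.trans_lt hu.1, hu.2⟩, hlt.le⟩))
  obtain ⟨d, hd, hdh⟩ := exists_thresholds hmono hnonneg hab hau hub hleft hright
  refine ⟨d, hd, u₀, fun u hu hne => ?_⟩
  rcases hne.lt_or_gt with hlt | hgt
  · rw [Finset.sum_congr rfl fun j _ => min_eq_right ((hdh j).1 u ⟨hu.1, hlt⟩)]
    exact min_le_right _ _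
  · rw [Finset.sum_congr rfl fun j _ => min_eq_left ((hdh j).2 u ⟨hgt, hu.2⟩), hd]
    exact min_le_left _ _

end ComonotoneSplit

section IncreasingConcave

variable {Ω : Type*} [MeasurableSpace Ω] {μ : Measure Ω}

/-- On nonnegative random variables, comparing all truncated means `𝔼[min c ·]` is the
increasing concave order. -/
def IncreasingConcaveLE (μ : Measure Ω) (A B : Ω → ℝ) : Prop :=
  ∀ c : ℝ, ∫ ω, min c (A ω) ∂μ ≤ ∫ ω, min c (B ω) ∂μ

lemma ProbabilityTheory.IdentDistrib.increasingConcaveLE {A B : Ω → ℝ}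
    (h : IdentDistrib A B μ μ) : IncreasingConcaveLE μ A B := fun c =>
  (h.comp (measurable_const.min measurable_id : Measurable fun x : ℝ => min c x)).integral_eq.le

namespace IncreasingConcaveLE

variable {A B : Ω → ℝ}

lemma const_mul (h : IncreasingConcaveLE μ A B) {a : ℝ} (ha : 0 ≤ a) :
    IncreasingConcaveLE μ (fun ω => a * A ω) (fun ω => a * B ω) := by
  intro c
  rcases ha.eq_or_lt with rfl | ha
  · simp
  have key : ∀ x, min c (a * x) = a * min (c / a) x := fun x => by
    rw [mul_min_of_nonneg _ _ ha.le, mul_div_cancel₀ _ ha.ne']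
  simp only [key, integral_const_mul]
  exact mul_le_mul_of_nonneg_left (h _) ha.le

lemma min_const (h : IncreasingConcaveLE μ A B) (d : ℝ) :
    IncreasingConcaveLE μ (fun ω => min d (A ω)) (fun ω => min d (B ω)) := fun c => by
  simpa only [← min_assoc] using h (min c d)

lemma integral_le (h : IncreasingConcaveLE μ A B) {d : ℝ} (hA : ∀ ω, A ω ≤ d)
    (hB : ∀ ω, B ω ≤ d) : ∫ ω, A ω ∂μ ≤ ∫ ω, B ω ∂μ := by
  simpa only [min_eq_right (hA _), min_eq_right (hB _)] using h d

end IncreasingConcaveLE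

lemma integrable_min_of_nonneg [IsFiniteMeasure μ] (c : ℝ) {f : Ω → ℝ} (hf : AEMeasurable f μ)
    (hf0 : 0 ≤ᵐ[μ] f) : Integrable (fun ω => min c (f ω)) μ :=
  Integrable.of_bound (aemeasurable_const.min hf).aestronglyMeasurable |c| <|
    hf0.mono fun _ hω => abs_le.2
      ⟨le_min (neg_abs_le c) ((neg_nonpos.2 (abs_nonneg c)).trans hω),
        (min_le_left _ _).trans (le_abs_self c)⟩

variable {ι : Type*} [Fintype ι] [Nonempty ι]

theorem increasingConcaveLE_sum_of_comonotone [IsFiniteMeasure μ] {a b : ℝ} (hab : a < b)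
    {U : Ω → ℝ} (hU_mem : ∀ᵐ ω ∂μ, U ω ∈ Ioo a b) (hU_atom : ∀ x, ∀ᵐ ω ∂μ, U ω ≠ x)
    {h : ι → ℝ → ℝ} (hmono : ∀ j, MonotoneOn (h j) (Ioo a b))
    (hnonneg : ∀ j, ∀ u ∈ Ioo a b, 0 ≤ h j u) (hhm : ∀ j, AEMeasurable (fun ω => h j (U ω)) μ)
    {T : ι → Ω → ℝ} (hTm : ∀ j, AEMeasurable (T j) μ) (hT0 : ∀ j, 0 ≤ᵐ[μ] T j)
    (hle : ∀ j, IncreasingConcaveLE μ (fun ω => h j (U ω)) (T j)) :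
    IncreasingConcaveLE μ (fun ω => ∑ j, h j (U ω)) (fun ω => ∑ j, T j ω) := by
  intro c
  obtain ⟨d, hd, u₀, hsplit⟩ := exists_sum_eq_min_sum_le_sum_min hmono hnonneg hab c
  have hh0 : ∀ j, 0 ≤ᵐ[μ] fun ω => h j (U ω) := fun j =>
    hU_mem.mono fun ω hω => hnonneg j _ hω
  have hint_h : ∀ j c, Integrable (fun ω => min c (h j (U ω))) μ := fun j c =>
    integrable_min_of_nonneg c (hhm j) (hh0 j)
  have hint_T : ∀ j c, Integrable (fun ω => min c (T j ω)) μ := fun j c =>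
    integrable_min_of_nonneg c (hTm j) (hT0 j)
  calc ∫ ω, min c (∑ j, h j (U ω)) ∂μ
      ≤ ∫ ω, ∑ j, min (d j) (h j (U ω)) ∂μ := by
        refine integral_mono_ae ?_ (integrable_finsetSum _ fun j _ => hint_h j _) ?_
        · refine integrable_min_of_nonneg c (Finset.aemeasurable_fun_sum _ fun j _ => hhm j) ?_
          filter_upwards [ae_all_iff.2 hh0] with ω hω using Finset.sum_nonneg fun j _ => hω j
        · filter_upwards [hU_mem, hU_atom u₀] with ω h1 h2 using hsplit _ h1 h2
    _ = ∑ j, ∫ ω, min (d j) (h j (U ω)) ∂μ := integral_finsetSum _ fun j _ => hint_h j _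
    _ ≤ ∑ j, ∫ ω, min (d j) (T j ω) ∂μ := Finset.sum_le_sum fun j _ => hle j (d j)
    _ = ∫ ω, ∑ j, min (d j) (T j ω) ∂μ := (integral_finsetSum _ fun j _ => hint_T j _).symm
    _ ≤ ∫ ω, min c (∑ j, T j ω) ∂μ := by
        refine integral_mono (integrable_finsetSum _ fun j _ => hint_T j _) ?_ fun ω => ?_
        · refine integrable_min_of_nonneg c (Finset.aemeasurable_fun_sum _ fun j _ => hTm j) ?_
          filter_upwards [ae_all_iff.2 hT0] with ω hω using Finset.sum_nonneg fun j _ => hω j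
        · exact hd ▸ le_min (Finset.sum_le_sum fun j _ => min_le_left _ _)
            (Finset.sum_le_sum fun j _ => min_le_right _ _)

end IncreasingConcave

section ClearingComparison

variable {n : ℕ} {L : Matrix (Fin n) (Fin (n + 1)) ℝ} {Ω : Type*} [MeasurableSpace Ω]
  {μ : Measure Ω}

lemma aemeasurable_clearingIter_apply {Y : Ω → Fin n → ℝ} (hY : AEMeasurable Y μ) (k : ℕ)
    (i : Fin n) : AEMeasurable (fun ω => clearingIter L k (Y ω) i) μ :=
  ((continuous_apply i).comp (continuous_clearingIter k)).measurable.comp_aemeasurable hY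

variable (hL : ∀ i j, 0 ≤ L i j)
include hL

theorem increasingConcaveLE_clearingIter [IsFiniteMeasure μ] {a b : ℝ} (hab : a < b)
    {U : Ω → ℝ} (hU_mem : ∀ᵐ ω ∂μ, U ω ∈ Ioo a b) (hU_atom : ∀ x, ∀ᵐ ω ∂μ, U ω ≠ x)
    {G : ℝ → Fin n → ℝ} (hG : MonotoneOn G (Ioo a b)) (hG0 : ∀ u, 0 ≤ G u)
    (hGm : AEMeasurable (fun ω => G (U ω)) μ) {X : Ω → Fin n → ℝ} (hXm : AEMeasurable X μ)
    (hX0 : ∀ ω, 0 ≤ X ω)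
    (hident : ∀ i, IdentDistrib (fun ω => G (U ω) i) (fun ω => X ω i) μ μ)
    (k : ℕ) (i : Fin n) :
    IncreasingConcaveLE μ (fun ω => clearingIter L k (G (U ω)) i)
      (fun ω => clearingIter L k (X ω) i) := by
  induction k generalizing i with
  | zero => exact fun c => le_rfl
  | succ k ih =>
    simp only [clearingIter_succ, clearingMap]
    refine IncreasingConcaveLE.min_const ?_ _
    -- the summands of `x i + ∑ j, π j i * p j`, with `none` standing for `x i`
    have hsum := increasingConcaveLE_sum_of_comonotone hab hU_mem hU_atom
      (h := fun (o : Option (Fin n)) u =>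
        o.elim (G u i) fun j => relLiab L j i * clearingIter L k (G u) j)
      (T := fun (o : Option (Fin n)) ω =>
        o.elim (X ω i) fun j => relLiab L j i * clearingIter L k (X ω) j)
      (by rintro (_ | j) u hu v hv huv
          exacts [hG hu hv huv i, mul_le_mul_of_nonneg_left
            (monotone_clearingIter hL k (hG hu hv huv) j) (relLiab_nonneg hL j i)])
      (by rintro (_ | j) u -
          exacts [hG0 u i, mul_nonneg (relLiab_nonneg hL j i) (clearingIter_nonneg hL (hG0 u) k j)])
      (by rintro (_ | j)
          exacts [(measurable_pi_apply i).comp_aemeasurable hGm,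
            (aemeasurable_clearingIter_apply hGm k j).const_mul _])
      (by rintro (_ | j)
          exacts [(measurable_pi_apply i).comp_aemeasurable hXm,
            (aemeasurable_clearingIter_apply hXm k j).const_mul _])
      (by rintro (_ | j) <;> refine ae_of_all _ fun ω => ?_
          exacts [hX0 ω i, mul_nonneg (relLiab_nonneg hL j i) (clearingIter_nonneg hL (hX0 ω) k j)])
      (by rintro (_ | j)
          exacts [(hident i).increasingConcaveLE, (ih j).const_mul (relLiab_nonneg hL j i)])
    simpa only [Fintype.sum_option, Option.elim] using hsum

lemma integrable_clearingPayment [IsFiniteMeasure μ] {Y p : Ω → Fin n → ℝ}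
    (hY : AEMeasurable Y μ) (hY0 : ∀ ω, 0 ≤ Y ω)
    (hp : ∀ ω, IsGreatestClearingPayment L (Y ω) (p ω)) (i : Fin n) :
    Integrable (fun ω => p ω i) μ := by
  refine Integrable.of_bound ?_ (pbar L i) (ae_of_all _ fun ω => ?_)
  · exact aestronglyMeasurable_of_tendsto_ae atTop
      (fun k => (aemeasurable_clearingIter_apply hY k i).aestronglyMeasurable)
      (ae_of_all _ fun ω => tendsto_pi_nhds.1 ((hp ω).tendsto_clearingIter hL (hY0 ω)) i)
  · obtain ⟨h0, hle⟩ := (hp ω).1.1 i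
    rwa [Real.norm_of_nonneg h0]

lemma tendsto_integral_clearingIter [IsFiniteMeasure μ]
    {Y p : Ω → Fin n → ℝ} (hY : AEMeasurable Y μ) (hY0 : ∀ ω, 0 ≤ Y ω)
    (hp : ∀ ω, IsGreatestClearingPayment L (Y ω) (p ω)) (i : Fin n) :
    Tendsto (fun k => ∫ ω, clearingIter L k (Y ω) i ∂μ) atTop (𝓝 (∫ ω, p ω i ∂μ)) := by
  refine tendsto_integral_of_dominated_convergence (fun _ => pbar L i)
    (fun k => (aemeasurable_clearingIter_apply hY k i).aestronglyMeasurable)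
    (integrable_const _) (fun k => ae_of_all _ fun ω => ?_)
    (ae_of_all _ fun ω => tendsto_pi_nhds.1 ((hp ω).tendsto_clearingIter hL (hY0 ω)) i)
  rw [Real.norm_of_nonneg (clearingIter_nonneg hL (hY0 ω) k i)]
  exact clearingIter_le_pbar k _ i

theorem integral_clearingPayment_le_of_comonotone [IsFiniteMeasure μ] {a b : ℝ} (hab : a < b)
    {U : Ω → ℝ} (hU_mem : ∀ᵐ ω ∂μ, U ω ∈ Ioo a b) (hU_atom : ∀ x, ∀ᵐ ω ∂μ, U ω ≠ x)
    {G : ℝ → Fin n → ℝ} (hG : MonotoneOn G (Ioo a b)) (hG0 : ∀ u, 0 ≤ G u)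
    (hGm : AEMeasurable (fun ω => G (U ω)) μ) {X : Ω → Fin n → ℝ} (hXm : AEMeasurable X μ)
    (hX0 : ∀ ω, 0 ≤ X ω)
    (hident : ∀ i, IdentDistrib (fun ω => G (U ω) i) (fun ω => X ω i) μ μ)
    {pZ pX : Ω → Fin n → ℝ} (hpZ : ∀ ω, IsGreatestClearingPayment L (G (U ω)) (pZ ω))
    (hpX : ∀ ω, IsGreatestClearingPayment L (X ω) (pX ω)) (i : Fin n) :
    ∫ ω, pZ ω i ∂μ ≤ ∫ ω, pX ω i ∂μ :=
  le_of_tendsto_of_tendsto' (tendsto_integral_clearingIter hL hGm (fun _ => hG0 _) hpZ i)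
    (tendsto_integral_clearingIter hL hXm hX0 hpX i) fun k =>
      (increasingConcaveLE_clearingIter hL hab hU_mem hU_atom hG hG0 hGm hXm hX0 hident k i
        ).integral_le (fun _ => clearingIter_le_pbar k _ i) (fun _ => clearingIter_le_pbar k _ i)

end ClearingComparison

section Quantile

variable {Ω : Type*} [MeasurableSpace Ω]

-- If `u ≥ 1` the set may be empty and `sInf ∅ = 0`: the quantile is monotone only on `Iio 1`.
def quantile (μ : Measure Ω) (Y : Ω → ℝ) (u : ℝ) : ℝ :=
  sInf {t : ℝ | 0 ≤ t ∧ u ≤ (μ {ω | Y ω ≤ t}).toReal}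

variable {μ : Measure Ω} {Y : Ω → ℝ}

lemma quantile_nonneg (u : ℝ) : 0 ≤ quantile μ Y u :=
  Real.sInf_nonneg fun _ ht => ht.1

variable [IsProbabilityMeasure μ] (hY : Measurable Y)
include hY

lemma toReal_measure_le_eq_cdf (t : ℝ) :
    (μ {ω | Y ω ≤ t}).toReal = cdf (μ.map Y) t := by
  have := Measure.isProbabilityMeasure_map (μ := μ) hY.aemeasurable
  rw [ProbabilityTheory.cdf_eq_real, measureReal_def, Measure.map_apply hY measurableSet_Iic]
  rfl

lemma quantile_set_nonempty {u : ℝ} (hu : u < 1) :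
    {t : ℝ | 0 ≤ t ∧ u ≤ (μ {ω | Y ω ≤ t}).toReal}.Nonempty := by
  simp only [toReal_measure_le_eq_cdf hY]
  exact (((ProbabilityTheory.tendsto_cdf_atTop _).eventually (eventually_ge_nhds hu)).and
    (eventually_ge_atTop 0)).exists.imp fun t ht => ⟨ht.2, ht.1⟩

lemma monotoneOn_quantile : MonotoneOn (quantile μ Y) (Iio 1) := fun _ _ _ hv huv =>
  csInf_le_csInf ⟨0, fun _ ht => ht.1⟩ (quantile_set_nonempty (μ := μ) hY hv) fun _ ht =>
    ⟨ht.1, huv.trans ht.2⟩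

lemma quantile_le_iff {u t : ℝ} (hu : u < 1) (ht : 0 ≤ t) :
    quantile μ Y u ≤ t ↔ u ≤ (μ {ω | Y ω ≤ t}).toReal := by
  refine ⟨fun hle => ?_, fun h => csInf_le ⟨0, fun _ hs => hs.1⟩ ⟨ht, h⟩⟩
  rw [toReal_measure_le_eq_cdf hY]
  set F := cdf (μ.map Y)
  have hright : ∀ s, quantile μ Y u < s → u ≤ F s := fun s hs => by
    obtain ⟨r, hr, hrs⟩ := exists_lt_of_csInf_lt (quantile_set_nonempty hY hu) hs
    exact (toReal_measure_le_eq_cdf (μ := μ) hY r ▸ hr.2).trans (F.mono hrs.le)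
  refine le_trans ?_ (F.mono hle)
  exact ge_of_tendsto ((F.right_continuous _).mono Ioi_subset_Ici_self).tendsto
    (eventually_nhdsWithin_of_forall hright)

end Quantile

section Uniform

variable {Ω : Type*} [MeasurableSpace Ω] {ν : Measure Ω} {U : Ω → ℝ}

variable (hUm : Measurable U) (hU : ν.map U = volume.restrict (Icc 0 1))
include hUm hU

lemma ae_mem_Ioo_of_map_eq_restrict_Icc : ∀ᵐ ω ∂ν, U ω ∈ Ioo 0 1 :=
  ae_of_ae_map hUm.aemeasurable <| by
    rw [hU, Measure.restrict_congr_set Ioo_ae_eq_Icc.symm]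
    exact ae_restrict_mem measurableSet_Ioo

lemma ae_ne_of_map_eq_restrict_Icc (x : ℝ) : ∀ᵐ ω ∂ν, U ω ≠ x :=
  ae_of_ae_map hUm.aemeasurable <| by
    rw [hU]
    exact ae_restrict_of_ae (measure_eq_zero_iff_ae_notMem.1 (measure_singleton x))

variable {Ω' : Type*} [MeasurableSpace Ω'] {μ : Measure Ω'} [IsProbabilityMeasure μ]
  {Y : Ω' → ℝ} (hY : Measurable Y)
include hY

lemma aemeasurable_quantile_comp : AEMeasurable (fun ω => quantile μ Y (U ω)) ν := by
  have : AEMeasurable (quantile μ Y) (ν.map U) := by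
    rw [hU, Measure.restrict_congr_set Ioo_ae_eq_Icc.symm]
    exact aemeasurable_restrict_of_monotoneOn measurableSet_Ioo
      ((monotoneOn_quantile hY).mono Ioo_subset_Iio_self)
  exact this.comp_aemeasurable hUm.aemeasurable

theorem identDistrib_quantile_comp [IsProbabilityMeasure ν] (hY0 : 0 ≤ᵐ[μ] Y) :
    IdentDistrib (fun ω => quantile μ Y (U ω)) Y ν μ := by
  have hq := aemeasurable_quantile_comp (μ := μ) hUm hU hY
  refine ⟨hq, hY.aemeasurable, ?_⟩
  have := Measure.isProbabilityMeasure_map hq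
  have := Measure.isProbabilityMeasure_map (μ := μ) hY.aemeasurable
  refine Measure.ext_of_Iic _ _ fun t => ?_
  rw [Measure.map_apply_of_aemeasurable hq measurableSet_Iic,
    Measure.map_apply hY measurableSet_Iic]
  rcases lt_or_ge t 0 with ht | ht
  · rw [eq_empty_of_forall_notMem (s := (fun ω => quantile μ Y (U ω)) ⁻¹' Iic t)
      fun ω hω => (ht.trans_le (quantile_nonneg _)).not_ge hω,
      measure_empty, eq_comm, measure_eq_zero_iff_ae_notMem]
    exact hY0.mono fun ω h hω => (ht.trans_le h).not_ge hω
  have hF1 : (μ {ω | Y ω ≤ t}).toReal ≤ 1 :=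
    toReal_measure_le_eq_cdf (μ := μ) hY t ▸ ProbabilityTheory.cdf_le_one _ _
  set F := (μ {ω | Y ω ≤ t}).toReal
  calc ν ((fun ω => quantile μ Y (U ω)) ⁻¹' Iic t) = ν (U ⁻¹' Iic F) := by
        refine measure_congr (eventuallyEq_set.2 ?_)
        filter_upwards [ae_mem_Ioo_of_map_eq_restrict_Icc hUm hU] with ω hω
        exact quantile_le_iff hY hω.2 ht
    _ = volume (Iic F ∩ Icc 0 1) := by
        rw [← Measure.map_apply hUm measurableSet_Iic, hU, Measure.restrict_apply measurableSet_Iic]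
    _ = ENNReal.ofReal F := by
        rw [show Iic F ∩ Icc 0 1 = Icc 0 F from Set.ext fun x =>
          ⟨fun ⟨h1, h2, _⟩ => ⟨h2, h1⟩, fun ⟨h1, h2⟩ => ⟨h2, h1, h2.trans hF1⟩⟩,
          Real.volume_Icc, sub_zero]
    _ = μ (Y ⁻¹' Iic t) := ENNReal.ofReal_toReal (measure_ne_top _ _)

end Uniform

lemma integral_add_sum_mul_sub {Ω ι : Type*} [MeasurableSpace Ω] [Fintype ι] {μ : Measure Ω}
    [IsProbabilityMeasure μ] {f : Ω → ℝ} {g : ι → Ω → ℝ} (hf : Integrable f μ)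
    (hg : ∀ j, Integrable (g j) μ) (a : ι → ℝ) (b : ℝ) :
    ∫ ω, (f ω + ∑ j, a j * g j ω - b) ∂μ = ∫ ω, f ω ∂μ + ∑ j, a j * ∫ ω, g j ω ∂μ - b := by
  have hsum : Integrable (fun ω => ∑ j, a j * g j ω) μ :=
    integrable_finsetSum _ fun j _ => (hg j).const_mul _
  rw [integral_sub (f := fun ω => f ω + ∑ j, a j * g j ω) (hf.add hsum) (integrable_const b),
    integral_add hf hsum,
    integral_finsetSum _ fun j _ => (hg j).const_mul _]
  simp [integral_const_mul]

theorem comonotonic_lower_bound_general (n : ℕ)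
    (L : Matrix (Fin n) (Fin (n + 1)) ℝ)
    (hL : ∀ i j, 0 ≤ L i j)
    (P : (Fin n → ℝ) → (Fin n → ℝ))
    (hP : ∀ x : Fin n → ℝ, (∀ i, 0 ≤ x i) → IsGreatestClearingPayment L x (P x))
    (Ω : Type) (mΩ : MeasurableSpace Ω) (ℙ : Measure Ω) (hprob : IsProbabilityMeasure ℙ)
    (X : Ω → Fin n → ℝ) (hXm : Measurable X) (hXpos : ∀ ω i, 0 ≤ X ω i)
    (hXint : ∀ i, Integrable (fun ω => X ω i) ℙ)
    (U : Ω → ℝ) (hUm : Measurable U)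
    (hU : ℙ.map U = volume.restrict (Set.Icc (0 : ℝ) 1))
    (Z : Ω → Fin n → ℝ)
    (hZ : ∀ ω i, Z ω i = sInf {t : ℝ | 0 ≤ t ∧ U ω ≤ (ℙ {ω' | X ω' i ≤ t}).toReal}) :
    ∀ i : Fin n,
      (∫ ω, (Z ω i + (∑ j, relLiab L j i * P (Z ω) j) - pbar L i) ∂ℙ
        ≤ ∫ ω, (X ω i + (∑ j, relLiab L j i * P (X ω) j) - pbar L i) ∂ℙ)
      ∧ (∫ ω, P (Z ω) i ∂ℙ ≤ ∫ ω, P (X ω) i ∂ℙ) := by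
  set G : ℝ → Fin n → ℝ := fun u i => quantile ℙ (fun ω => X ω i) u
  obtain rfl : Z = fun ω => G (U ω) := funext fun ω => funext (hZ ω)
  have hXi : ∀ i, Measurable fun ω => X ω i := fun i => (measurable_pi_apply i).comp hXm
  have hident : ∀ i, IdentDistrib (fun ω => G (U ω) i) (fun ω => X ω i) ℙ ℙ :=
    fun i => identDistrib_quantile_comp hUm hU (hXi i) (ae_of_all _ fun ω => hXpos ω i)
  have hZm : AEMeasurable (fun ω => G (U ω)) ℙ :=
    aemeasurable_pi_lambda _ fun i => (hident i).aemeasurable_fst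
  have hZ0 : ∀ u, 0 ≤ G u := fun u i => quantile_nonneg u
  have hG : MonotoneOn G (Ioo 0 1) := fun u hu v hv huv i =>
    monotoneOn_quantile (hXi i) (Ioo_subset_Iio_self hu) (Ioo_subset_Iio_self hv) huv
  have hpZ : ∀ ω, IsGreatestClearingPayment L (G (U ω)) (P (G (U ω))) := fun ω => hP _ (hZ0 _)
  have hpX : ∀ ω, IsGreatestClearingPayment L (X ω) (P (X ω)) := fun ω => hP _ (hXpos ω)
  have hle := integral_clearingPayment_le_of_comonotone hL zero_lt_one
    (ae_mem_Ioo_of_map_eq_restrict_Icc hUm hU) (ae_ne_of_map_eq_restrict_Icc hUm hU) hG hZ0 hZm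
    hXm.aemeasurable hXpos hident hpZ hpX
  intro i
  refine ⟨?_, hle i⟩
  rw [integral_add_sum_mul_sub ((hident i).integrable_iff.2 (hXint i))
      (integrable_clearingPayment hL hZm (fun _ => hZ0 _) hpZ),
    integral_add_sum_mul_sub (hXint i) (integrable_clearingPayment hL hXm.aemeasurable hXpos hpX),
    (hident i).integral_eq]
  linarith [Finset.sum_le_sum fun j (_ : j ∈ Finset.univ) =>
    mul_le_mul_of_nonneg_left (hle j) (relLiab_nonneg hL j i)]

/-- In the Eisenberg–Noe setting under the regularity assumption, for an integrable random
endowment vector `X` and its comonotonic version `Z_i = F_{X_i}^{-1}(U)` (with `U` uniform on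
`[0,1]`), for every bank `i`: `𝔼[V_i(Z)] ≤ 𝔼[V_i(X)]` and `𝔼[p_i(Z)] ≤ 𝔼[p_i(X)]`. -/
theorem comonotonic_lower_bound (n : ℕ) (hn : 1 ≤ n)
    (L : Matrix (Fin n) (Fin (n + 1)) ℝ)
    (hL : ∀ i j, 0 ≤ L i j) (hLdiag : ∀ i : Fin n, L i i.castSucc = 0)
    (hreg : ∀ i, 0 < pbar L i ∧ ∑ j, relLiab L i j < 1)
    (P : (Fin n → ℝ) → (Fin n → ℝ))
    (hP : ∀ x : Fin n → ℝ, (∀ i, 0 ≤ x i) → IsGreatestClearingPayment L x (P x))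
    (Ω : Type) (mΩ : MeasurableSpace Ω) (ℙ : Measure Ω) (hprob : IsProbabilityMeasure ℙ)
    (X : Ω → Fin n → ℝ) (hXm : Measurable X) (hXpos : ∀ ω i, 0 ≤ X ω i)
    (hXint : ∀ i, Integrable (fun ω => X ω i) ℙ)
    (U : Ω → ℝ) (hUm : Measurable U)
    (hU : ℙ.map U = volume.restrict (Set.Icc (0 : ℝ) 1))
    (Z : Ω → Fin n → ℝ)
    (hZ : ∀ ω i, Z ω i = sInf {t : ℝ | 0 ≤ t ∧ U ω ≤ (ℙ {ω' | X ω' i ≤ t}).toReal}) :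
    ∀ i : Fin n,
      (∫ ω, (Z ω i + (∑ j, relLiab L j i * P (Z ω) j) - pbar L i) ∂ℙ
        ≤ ∫ ω, (X ω i + (∑ j, relLiab L j i * P (X ω) j) - pbar L i) ∂ℙ)
      ∧ (∫ ω, P (Z ω) i ∂ℙ ≤ ∫ ω, P (X ω) i ∂ℙ) :=
  comonotonic_lower_bound_general n L hL P hP Ω mΩ ℙ hprob X hXm hXpos hXint U hUm hU Z hZ
end
end

section
/- Consider the two-bank network with societal node given by liabilities L_{12} = 1, L_{13} = 1, L_{21} = 1, L_{23} = 2 (so p̄ = (2,3), π_{12} = 1/2, π_{21} = 1/3) and recovery rates α_x, α_L ∈ [0,1]. Then the greatest clearing payments for the four endowment vectors are: p((0,0)) = (0,0); p((0,2)) = (4α_x α_L/(6 − α_L²), 12α_x/(6 − α_L²)); p((1,0)) = (6α_x/(6 − α_L²), 3α_x α_L/(6 − α_L²)); and p((1,2)) = (2,3). Consequently, for the countermonotonic random endowment X taking values (0,2) and (1,0) each with probability 1/2 and the comonotonic random endowment Z taking values (0,0) and (1,2) each with probability 1/2, one has 𝔼[p(X)] = (α_x(2α_L + 3)/(6 − α_L²),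 3α_x(α_L + 4)/(2(6 − α_L²))) and 𝔼[p(Z)] = (1, 3/2), with 𝔼[p_i(X)] < 𝔼[p_i(Z)] for both banks i whenever min{α_x, α_L} < 1; hence the comonotonic lower bound on expected payments fails in the presence of bankruptcy costs. -/
/-!
Below the endowment `(1, 2)` no bank can be solvent: a solvent bank has wealth at most
`x₁ - 1`, resp. `x₂ - 2`, and is solvent with zero wealth only if the other bank pays in full,
which in turn needs `x = (1, 2)`. Hence both banks default, their payments `p = p̄ + V` solve the
linear system `p₁ = α_x x₁ + α_L p₂ / 3`, `p₂ = α_x x₂ + α_L p₁ / 2` with determinant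
`(6 - α_L²) / 6`, while at `(1, 2)` the wealth `0` is a fixed point and dominates all others.
The expectations are averages over the two atoms, and the strict inequalities come from
`6 - α_L² - α_x (2α_L + 3) = (1 - α_x)(2α_L + 3) + (1 - α_L)(3 + α_L)` and its analogue.
-/

open Matrix BigOperators MeasureTheory

noncomputable section

/-- Total liabilities `p̄ = (2, 3)` for the two-bank network with `L₁₂ = 1`, `L₁₃ = 1`,
`L₂₁ = 1`, `L₂₃ = 2`. -/
def pbar2 : Fin 2 → ℝ := ![2, 3]

/-- Relative liabilities `π₁₂ = 1/2`, `π₂₁ = 1/3`. -/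
def Pi2 : Matrix (Fin 2) (Fin 2) ℝ := !![0, 1/2; 1/3, 0]

/-- The clearing map in wealths `Ψ_x` for the two-bank network. -/
def Psi2 (αx αL : ℝ) (x V : Fin 2 → ℝ) (i : Fin 2) : ℝ :=
  if 0 ≤ V i then
    x i + ∑ j, Pi2 j i * max (pbar2 j - max (-(V j)) 0) 0 - pbar2 i
  else
    αx * x i + αL * ∑ j, Pi2 j i * max (pbar2 j - max (-(V j)) 0) 0 - pbar2 i

/-- The clearing payments `p(x) = p̄ − V(x)⁻`. -/
def pay2 (Vmap : (Fin 2 → ℝ) → (Fin 2 → ℝ)) (x : Fin 2 → ℝ) : Fin 2 → ℝ :=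
  fun i => pbar2 i - max (-(Vmap x i)) 0

lemma Pi2_nonneg (i j : Fin 2) : 0 ≤ Pi2 i j := by
  fin_cases i <;> fin_cases j <;> norm_num [Pi2]

lemma Psi2_apply_zero (αx αL : ℝ) (x V : Fin 2 → ℝ) : Psi2 αx αL x V 0 =
    if 0 ≤ V 0 then x 0 + max (3 - max (-V 1) 0) 0 / 3 - 2
    else αx * x 0 + αL * (max (3 - max (-V 1) 0) 0 / 3) - 2 := by
  simp [Psi2, Pi2, pbar2, Fin.sum_univ_two, div_eq_inv_mul]

lemma Psi2_apply_one (αx αL : ℝ) (x V : Fin 2 → ℝ) : Psi2 αx αL x V 1 =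
    if 0 ≤ V 1 then x 1 + max (2 - max (-V 0) 0) 0 / 2 - 3
    else αx * x 1 + αL * (max (2 - max (-V 0) 0) 0 / 2) - 3 := by
  simp [Psi2, Pi2, pbar2, Fin.sum_univ_two, div_eq_inv_mul]

lemma max_payment_le {p v : ℝ} (hp : 0 ≤ p) : max (p - max (-v) 0) 0 ≤ p :=
  max_le (by linarith [le_max_right (-v) 0]) hp

lemma eq_of_linear_system {a c d p q : ℝ} (ha : 6 - a ^ 2 ≠ 0)
    (hp : p = c + a / 3 * q) (hq : q = d + a / 2 * p) :
    p = (6 * c + 2 * a * d) / (6 - a ^ 2) ∧ q = (6 * d + 3 * a * c) / (6 - a ^ 2) := by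
  subst hp
  constructor <;> rw [eq_div_iff ha]
  · linear_combination 2 * a * hq
  · linear_combination 6 * hq

section ClearingMap

variable {αx αL : ℝ} {x V : Fin 2 → ℝ}

lemma neg_pbar2_le_Psi2 (hαx : 0 ≤ αx) (hαL : 0 ≤ αL) (hx : ∀ i, 0 ≤ x i)
    (V : Fin 2 → ℝ) (i : Fin 2) : -pbar2 i ≤ Psi2 αx αL x V i := by
  have hin : 0 ≤ ∑ j, Pi2 j i * max (pbar2 j - max (-(V j)) 0) 0 :=
    Finset.sum_nonneg fun j _ => mul_nonneg (Pi2_nonneg j i) (le_max_right _ _)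
  unfold Psi2
  split_ifs
  · linarith [hx i]
  · linarith [mul_nonneg hαx (hx i), mul_nonneg hαL hin]

lemma nonpos_of_Psi2_fixed (hx0 : x 0 ≤ 1) (hx1 : x 1 ≤ 2) (hfix : Psi2 αx αL x V = V) :
    ∀ i, V i ≤ 0 := by
  have e0 := congrFun hfix 0
  have e1 := congrFun hfix 1
  rw [Psi2_apply_zero] at e0
  rw [Psi2_apply_one] at e1
  have r0 := max_payment_le (p := 3) (v := V 1) (by norm_num)
  have r1 := max_payment_le (p := 2) (v := V 0) (by norm_num)
  refine Fin.forall_fin_two.mpr ⟨not_lt.mp fun h => ?_, not_lt.mp fun h => ?_⟩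
  · rw [if_pos h.le] at e0; linarith
  · rw [if_pos h.le] at e1; linarith

lemma neg_of_Psi2_fixed (hx0 : x 0 ≤ 1) (hx1 : x 1 ≤ 2) (hx : x 0 < 1 ∨ x 1 < 2)
    (hfix : Psi2 αx αL x V = V) : ∀ i, V i < 0 := by
  have hV := nonpos_of_Psi2_fixed hx0 hx1 hfix
  have e0 := congrFun hfix 0
  have e1 := congrFun hfix 1
  rw [Psi2_apply_zero] at e0
  rw [Psi2_apply_one] at e1
  have solvent0 : 0 ≤ V 0 → x 0 = 1 ∧ 0 ≤ V 1 := by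
    intro h
    rw [if_pos h] at e0
    have r0 := max_payment_le (p := 3) (v := V 1) (by norm_num)
    refine ⟨by linarith [hV 0], not_lt.mp fun h1 => ?_⟩
    rw [max_eq_left (neg_nonneg.mpr h1.le)] at e0
    have : max (3 - -V 1) 0 < 3 := max_lt (by linarith) (by norm_num)
    linarith [hV 0]
  have solvent1 : 0 ≤ V 1 → x 1 = 2 ∧ 0 ≤ V 0 := by
    intro h
    rw [if_pos h] at e1
    have r1 := max_payment_le (p := 2) (v := V 0) (by norm_num)
    refine ⟨by linarith [hV 1], not_lt.mp fun h0 => ?_⟩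
    rw [max_eq_left (neg_nonneg.mpr h0.le)] at e1
    have : max (2 - -V 0) 0 < 2 := max_lt (by linarith) (by norm_num)
    linarith [hV 1]
  refine Fin.forall_fin_two.mpr ⟨not_le.mp fun h => ?_, not_le.mp fun h => ?_⟩
  · obtain ⟨h0, h1⟩ := solvent0 h
    have := (solvent1 h1).1
    rcases hx with hx | hx <;> linarith
  · obtain ⟨h1, h0⟩ := solvent1 h
    have := (solvent0 h0).1
    rcases hx with hx | hx <;> linarith

lemma payments_eq_of_Psi2_fixed_of_neg (hαx : 0 ≤ αx) (hαL : 0 ≤ αL) (hx : ∀ i, 0 ≤ x i)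
    (hfix : Psi2 αx αL x V = V) (hV : ∀ i, V i < 0) :
    2 + V 0 = αx * x 0 + αL / 3 * (3 + V 1) ∧ 3 + V 1 = αx * x 1 + αL / 2 * (2 + V 0) := by
  -- hence no payment of a defaulting bank is truncated at `0`
  have hlow : ∀ i, -pbar2 i ≤ V i := fun i =>
    congrFun hfix i ▸ neg_pbar2_le_Psi2 hαx hαL hx V i
  have e0 := congrFun hfix 0
  have e1 := congrFun hfix 1
  rw [Psi2_apply_zero, if_neg (hV 0).not_ge, max_eq_left (neg_nonneg.mpr (hV 1).le),
    max_eq_left (by linarith [hlow 1, show pbar2 1 = 3 from rfl])] at e0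
  rw [Psi2_apply_one, if_neg (hV 1).not_ge, max_eq_left (neg_nonneg.mpr (hV 0).le),
    max_eq_left (by linarith [hlow 0, show pbar2 0 = 2 from rfl])] at e1
  constructor <;> linarith

variable {Vmap : (Fin 2 → ℝ) → (Fin 2 → ℝ)}

lemma pay2_eq_of_lt (hαx : 0 ≤ αx) (hαL0 : 0 ≤ αL) (hαL1 : αL ≤ 1) (hx : ∀ i, 0 ≤ x i)
    (hx0 : x 0 ≤ 1) (hx1 : x 1 ≤ 2) (hlt : x 0 < 1 ∨ x 1 < 2)
    (hfix : Psi2 αx αL x (Vmap x) = Vmap x) :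
    pay2 Vmap x = ![(6 * αx * x 0 + 2 * αx * αL * x 1) / (6 - αL ^ 2),
      (6 * αx * x 1 + 3 * αx * αL * x 0) / (6 - αL ^ 2)] := by
  have hneg := neg_of_Psi2_fixed hx0 hx1 hlt hfix
  have hpay : ∀ i, pay2 Vmap x i = pbar2 i + Vmap x i := fun i => by
    rw [pay2, max_eq_left (neg_nonneg.mpr (hneg i).le), sub_neg_eq_add]
  obtain ⟨e0, e1⟩ := payments_eq_of_Psi2_fixed_of_neg hαx hαL0 hx hfix hneg
  obtain ⟨h0, h1⟩ := eq_of_linear_system (by nlinarith) e0 e1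
  ext i
  fin_cases i
  · simpa [hpay, pbar2, mul_assoc, mul_left_comm αL] using h0
  · simpa [hpay, pbar2, mul_assoc, mul_left_comm αL] using h1

lemma Psi2_one_two_zero : Psi2 αx αL ![1, 2] 0 = 0 := by
  ext i
  fin_cases i <;> norm_num [Psi2_apply_zero, Psi2_apply_one]

lemma pay2_one_two (hV : IsGreatest {V | Psi2 αx αL ![1, 2] V = V} (Vmap ![1, 2])) :
    pay2 Vmap ![1, 2] = ![2, 3] := by
  have hle := nonpos_of_Psi2_fixed (by norm_num) (by norm_num) hV.1
  have hzero : Vmap ![1, 2] = 0 := le_antisymm hle (hV.2 Psi2_one_two_zero)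
  ext i
  fin_cases i <;> simp [pay2, hzero, pbar2]

end ClearingMap

section TwoPoint

variable {Ω E F : Type*} [MeasurableSpace Ω] [MeasurableSpace E] [MeasurableSingletonClass E]
  [NormedAddCommGroup F] [NormedSpace ℝ F] [CompleteSpace F] {μ : Measure Ω} {X : Ω → E} {v w : E}

lemma integral_comp_of_ae_eq_or_eq [IsFiniteMeasure μ] (hX : Measurable X) (hvw : v ≠ w)
    (hae : ∀ᵐ ω ∂μ, X ω = v ∨ X ω = w) (f : E → F) :
    ∫ ω, f (X ω) ∂μ = μ.real (X ⁻¹' {v}) • f v + μ.real (X ⁻¹' {w}) • f w := by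
  have hv : MeasurableSet (X ⁻¹' {v}) := hX (measurableSet_singleton v)
  have hw : MeasurableSet (X ⁻¹' {w}) := hX (measurableSet_singleton w)
  have hdisj : Disjoint (X ⁻¹' {v}) (X ⁻¹' {w}) :=
    Set.disjoint_left.mpr fun ω hωv hωw => hvw (hωv.symm.trans hωw)
  have hfv : Set.EqOn (fun ω => f (X ω)) (fun _ => f v) (X ⁻¹' {v}) := fun ω hω => congrArg f hω
  have hfw : Set.EqOn (fun ω => f (X ω)) (fun _ => f w) (X ⁻¹' {w}) := fun ω hω => congrArg f hω
  calc ∫ ω, f (X ω) ∂μ = ∫ ω in X ⁻¹' {v} ∪ X ⁻¹' {w}, f (X ω) ∂μ := by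
        rw [Measure.restrict_eq_self_of_ae_mem (s := X ⁻¹' {v} ∪ X ⁻¹' {w}) hae]
    _ = ∫ ω in X ⁻¹' {v}, f v ∂μ + ∫ ω in X ⁻¹' {w}, f w ∂μ := by
        rw [setIntegral_union hdisj hw ((integrableOn_const).congr_fun hfv.symm hv)
          ((integrableOn_const).congr_fun hfw.symm hw), setIntegral_congr_fun hv hfv,
          setIntegral_congr_fun hw hfw]
    _ = _ := by rw [setIntegral_const, setIntegral_const]

lemma integral_comp_of_measure_eq_half [IsProbabilityMeasure μ] (hX : Measurable X)
    (hvw : v ≠ w) (hμv : μ (X ⁻¹' {v}) = 1 / 2) (hμw : μ (X ⁻¹' {w}) = 1 / 2) (f : E → ℝ) :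
    ∫ ω, f (X ω) ∂μ = (f v + f w) / 2 := by
  have hae : ∀ᵐ ω ∂μ, X ω = v ∨ X ω = w := by
    have hfull : μ (X ⁻¹' {v} ∪ X ⁻¹' {w}) = 1 := by
      rw [measure_union (Set.disjoint_left.mpr fun ω hωv hωw => hvw (hωv.symm.trans hωw))
        (hX (measurableSet_singleton w)), hμv, hμw, ENNReal.add_halves]
    exact (prob_compl_eq_zero_iff ((hX (measurableSet_singleton v)).union
      (hX (measurableSet_singleton w)))).mpr hfull
  rw [integral_comp_of_ae_eq_or_eq hX hvw hae, measureReal_def, measureReal_def, hμv, hμw]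
  norm_num
  ring

end TwoPoint

section Comparison

variable {αx αL : ℝ}

lemma expected_pay2_zero_lt (hαx0 : 0 ≤ αx) (hαx1 : αx ≤ 1) (hαL0 : 0 ≤ αL) (hαL1 : αL ≤ 1)
    (h : min αx αL < 1) : αx * (2 * αL + 3) / (6 - αL ^ 2) < 1 := by
  rw [div_lt_one (by nlinarith)]
  have hgap : 6 - αL ^ 2 - αx * (2 * αL + 3) = (1 - αx) * (2 * αL + 3) + (1 - αL) * (3 + αL) := by
    ring
  rcases min_lt_iff.mp h with h | h <;> nlinarith

lemma expected_pay2_one_lt (hαx0 : 0 ≤ αx) (hαx1 : αx ≤ 1) (hαL0 : 0 ≤ αL) (hαL1 : αL ≤ 1)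
    (h : min αx αL < 1) : 3 * αx * (αL + 4) / (2 * (6 - αL ^ 2)) < 3 / 2 := by
  rw [div_lt_div_iff₀ (by nlinarith) two_pos]
  have hgap : 6 - αL ^ 2 - αx * (αL + 4) = (1 - αx) * (αL + 4) + (1 - αL) * (2 + αL) := by
    ring
  rcases min_lt_iff.mp h with h | h <;> nlinarith

end Comparison

/-- In the two-bank network with societal node (`p̄ = (2,3)`, `π₁₂ = 1/2`, `π₂₁ = 1/3`) and
recovery rates `α_x, α_L ∈ [0,1]`, the greatest clearing payments at the four endowment
vectors are as displayed; consequently for the countermonotonic endowment `X` (values `(0,2)`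
and `(1,0)` each with probability `1/2`) and the comonotonic endowment `Z` (values `(0,0)` and
`(1,2)` each with probability `1/2`) one has
`𝔼[p(X)] = (α_x(2α_L+3)/(6−α_L²), 3α_x(α_L+4)/(2(6−α_L²)))`, `𝔼[p(Z)] = (1, 3/2)`, and
`𝔼[p_i(X)] < 𝔼[p_i(Z)]` for both banks whenever `min{α_x, α_L} < 1`: the comonotonic lower
bound on expected payments fails in the presence of bankruptcy costs. -/
theorem two_bank_counterexample (αx αL : ℝ)
    (hαx : αx ∈ Set.Icc (0 : ℝ) 1) (hαL : αL ∈ Set.Icc (0 : ℝ) 1)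
    (Vmap : (Fin 2 → ℝ) → (Fin 2 → ℝ))
    (hV : ∀ x : Fin 2 → ℝ, (∀ i, 0 ≤ x i) →
      IsGreatest {V | Psi2 αx αL x V = V} (Vmap x)) :
    pay2 Vmap ![0, 0] = ![0, 0]
    ∧ pay2 Vmap ![0, 2] = ![4 * αx * αL / (6 - αL ^ 2), 12 * αx / (6 - αL ^ 2)]
    ∧ pay2 Vmap ![1, 0] = ![6 * αx / (6 - αL ^ 2), 3 * αx * αL / (6 - αL ^ 2)]
    ∧ pay2 Vmap ![1, 2] = ![2, 3]
    ∧ (∀ (Ω : Type) (mΩ : MeasurableSpace Ω) (μ : Measure Ω),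
        IsProbabilityMeasure μ →
        ∀ X Z : Ω → Fin 2 → ℝ, Measurable X → Measurable Z →
          μ {ω | X ω = ![0, 2]} = 1 / 2 → μ {ω | X ω = ![1, 0]} = 1 / 2 →
          μ {ω | Z ω = ![0, 0]} = 1 / 2 → μ {ω | Z ω = ![1, 2]} = 1 / 2 →
          ((∀ i, ∫ ω, pay2 Vmap (X ω) i ∂μ
              = ![αx * (2 * αL + 3) / (6 - αL ^ 2),
                  3 * αx * (αL + 4) / (2 * (6 - αL ^ 2))] i)
            ∧ (∀ i, ∫ ω, pay2 Vmap (Z ω) i ∂μ = ![1, 3 / 2] i)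
            ∧ (min αx αL < 1 → ∀ i,
                ∫ ω, pay2 Vmap (X ω) i ∂μ < ∫ ω, pay2 Vmap (Z ω) i ∂μ))) := by
  obtain ⟨hαx0, hαx1⟩ := hαx
  obtain ⟨hαL0, hαL1⟩ := hαL
  have hpay : ∀ a b : ℝ, 0 ≤ a → a ≤ 1 → 0 ≤ b → b ≤ 2 → a < 1 ∨ b < 2 →
      pay2 Vmap ![a, b] = ![(6 * αx * a + 2 * αx * αL * b) / (6 - αL ^ 2),
        (6 * αx * b + 3 * αx * αL * a) / (6 - αL ^ 2)] := fun a b ha0 ha1 hb0 hb1 hlt =>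
    pay2_eq_of_lt hαx0 hαL0 hαL1 (Fin.forall_fin_two.mpr ⟨ha0, hb0⟩) ha1 hb1 hlt
      (hV _ (Fin.forall_fin_two.mpr ⟨ha0, hb0⟩)).1
  have h00 : pay2 Vmap ![0, 0] = ![0, 0] := by
    rw [hpay 0 0 le_rfl zero_le_one le_rfl zero_le_two (Or.inl one_pos)]; simp
  have h02 : pay2 Vmap ![0, 2] = ![4 * αx * αL / (6 - αL ^ 2), 12 * αx / (6 - αL ^ 2)] := by
    rw [hpay 0 2 le_rfl zero_le_one zero_le_two le_rfl (Or.inl one_pos)]; ring_nf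
  have h10 : pay2 Vmap ![1, 0] = ![6 * αx / (6 - αL ^ 2), 3 * αx * αL / (6 - αL ^ 2)] := by
    rw [hpay 1 0 zero_le_one le_rfl le_rfl zero_le_two (Or.inr two_pos)]; ring_nf
  have h12 : pay2 Vmap ![1, 2] = ![2, 3] :=
    pay2_one_two (hV _ (Fin.forall_fin_two.mpr ⟨zero_le_one, zero_le_two⟩))
  refine ⟨h00, h02, h10, h12, fun Ω _ μ _ X Z hX hZ hX02 hX10 hZ00 hZ12 => ?_⟩
  have hEX : ∀ i, ∫ ω, pay2 Vmap (X ω) i ∂μ = ![αx * (2 * αL + 3) / (6 - αL ^ 2),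
      3 * αx * (αL + 4) / (2 * (6 - αL ^ 2))] i := fun i => by
    rw [integral_comp_of_measure_eq_half hX (fun h => by simpa using congrFun h 0) hX02 hX10
      (pay2 Vmap · i), h02, h10]
    have hD : 6 - αL ^ 2 ≠ 0 := (show 0 < 6 - αL ^ 2 by nlinarith).ne'
    fin_cases i <;>
      simp only [Fin.zero_eta, Fin.mk_one, Fin.isValue, cons_val_zero, cons_val_one,
        cons_val_fin_one] <;>
      field_simp <;> ring
  have hEZ : ∀ i, ∫ ω, pay2 Vmap (Z ω) i ∂μ = ![1, 3 / 2] i := fun i => by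
    rw [integral_comp_of_measure_eq_half hZ (fun h => by simpa using congrFun h 0) hZ00 hZ12
      (pay2 Vmap · i), h00, h12]
    fin_cases i <;> norm_num
  refine ⟨hEX, hEZ, fun hmin => Fin.forall_fin_two.mpr ⟨?_, ?_⟩⟩ <;> rw [hEX, hEZ]
  · exact expected_pay2_zero_lt hαx0 hαx1 hαL0 hαL1 hmin
  · exact expected_pay2_one_lt hαx0 hαx1 hαL0 hαL1 hmin
end
end
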